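/- If A and B are finite groups, then the second nilpotent product A *₂ B is finite of order |A|·|B|·|A^{ab} ⊗ B^{ab}|. -/

import Mathlib

open Monoid
open scoped commutatorElement

/-- The normal subgroup of the free product `A ∗ B` generated by commutators
`⁅x, ⁅a, b⁆⁆` with `x ∈ A ∗ B`, `a ∈ A`, `b ∈ B`. -/
def nil2Rel (A B : Type*) [Group A] [Group B] : Subgroup (Coprod A B) :=
  Subgroup.normalClosure
    {z | ∃ (x : Coprod A B) (a : A) (b : B), z = ⁅x, ⁅(Coprod.inl a : Coprod A B), Coprod.inr b⁆⁆}

instance (A B : Type*) [Group A] [Group B] : (nil2Rel A B).Normal :=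
  Subgroup.normalClosure_normal

/-- The second nilpotent product `A *₂ B = (A ∗ B)/[A ∗ B, [A,B]]`. -/
def Nil2 (A B : Type*) [Group A] [Group B] : Type _ :=
  Coprod A B ⧸ nil2Rel A B

instance (A B : Type*) [Group A] [Group B] : Group (Nil2 A B) :=
  QuotientGroup.Quotient.group _

/-- Canonical map `A → A *₂ B`. -/
def Nil2.inl {A B : Type*} [Group A] [Group B] : A →* Nil2 A B :=
  (QuotientGroup.mk' (nil2Rel A B)).comp Coprod.inl

/-- Canonical map `B → A *₂ B`. -/
def Nil2.inr {A B : Type*} [Group A] [Group B] : B →* Nil2 A B :=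
  (QuotientGroup.mk' (nil2Rel A B)).comp Coprod.inr

/-- The subgroup `[A,B]⁽²⁾` of `A *₂ B` generated by the commutators `⁅a, b⁆`. -/
def commSubgroup (A B : Type*) [Group A] [Group B] : Subgroup (Nil2 A B) :=
  Subgroup.closure {z | ∃ (a : A) (b : B), z = ⁅(Nil2.inl a : Nil2 A B), Nil2.inr b⁆}

/-!
Write `[a] ⊗ [b]` for the image of `(a, b)` in `Aᵃᵇ ⊗ Bᵃᵇ`. The set `A × B × (Aᵃᵇ ⊗ Bᵃᵇ)` is a
group under `(a, b, s) (a', b', t) = (a a', b b', s + t - [a'] ⊗ [b])`, in which `(1, 1, t)` is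
central and `⁅a, b⁆ = (1, 1, [a] ⊗ [b])`; hence `A *₂ B` maps to it. Conversely, in `A *₂ B`
the commutators `⁅a, b⁆` are central, hence bimultiplicative, so `[a] ⊗ [b] ↦ ⁅a, b⁆` extends to
a homomorphism `c` from `Aᵃᵇ ⊗ Bᵃᵇ` to the centre, and `(a, b, t) ↦ a b c(t)` is a homomorphism
back, because `b a = a b c(-[a] ⊗ [b])`. The two maps are mutually inverse. Finally `Aᵃᵇ ⊗ Bᵃᵇ`
is a finitely generated abelian group killed by `|Aᵃᵇ|`, hence finite.
-/

open scoped TensorProduct IsMulCommutative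

section CentralCommutators

variable {G : Type*} [Group G]

theorem commutatorElement_mul_left_of_mem_center {a b c : G} (h : ⁅b, c⁆ ∈ Subgroup.center G) :
    ⁅a * b, c⁆ = ⁅a, c⁆ * ⁅b, c⁆ := by
  rw [commutatorElement_mul_left_eq_conj_mul, Subgroup.mem_center_iff.mp h a,
    mul_inv_cancel_right, Subgroup.mem_center_iff.mp h]

theorem commutatorElement_mul_right_of_mem_center {a b c : G} (h : ⁅a, c⁆ ∈ Subgroup.center G) :
    ⁅a, b * c⁆ = ⁅a, b⁆ * ⁅a, c⁆ := by
  rw [commutatorElement_mul_right_eq_mul_conj, mul_assoc _ b, Subgroup.mem_center_iff.mp h b,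
    ← mul_assoc, mul_inv_cancel_right]

variable {A B : Type*} [Group A] [Group B]

def commutatorPairing (f : A →* G) (g : B →* G) (h : ∀ a b, ⁅f a, g b⁆ ∈ Subgroup.center G) :
    A →* B →* Subgroup.center G :=
  MonoidHom.mk'
    (fun a ↦ MonoidHom.mk' (fun b ↦ ⟨⁅f a, g b⁆, h a b⟩) fun b b' ↦ Subtype.ext <| by
      simpa only [map_mul, Subgroup.coe_mul] using
        commutatorElement_mul_right_of_mem_center (h a b'))
    fun a a' ↦ MonoidHom.ext fun b ↦ Subtype.ext <| by
      simpa only [map_mul, MonoidHom.mul_apply, MonoidHom.mk'_apply, Subgroup.coe_mul] using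
        commutatorElement_mul_left_of_mem_center (h a' b)

@[simp]
theorem coe_commutatorPairing_apply_apply (f : A →* G) (g : B →* G)
    (h : ∀ a b, ⁅f a, g b⁆ ∈ Subgroup.center G) (a : A) (b : B) :
    (commutatorPairing f g h a b : G) = ⁅f a, g b⁆ :=
  rfl

end CentralCommutators

abbrev AbTensor (A B : Type*) [Group A] [Group B] :=
  Additive (Abelianization A) ⊗[ℤ] Additive (Abelianization B)

namespace AbTensor

variable {A B C : Type*} [Group A] [Group B] [CommGroup C]

def tmul (a : A) (b : B) : AbTensor A B :=
  Additive.ofMul (Abelianization.of a) ⊗ₜ Additive.ofMul (Abelianization.of b)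

@[simp]
theorem tmul_mul_left (a a' : A) (b : B) : tmul (a * a') b = tmul a b + tmul a' b := by
  simp [tmul, TensorProduct.add_tmul]

@[simp]
theorem tmul_mul_right (a : A) (b b' : B) : tmul a (b * b') = tmul a b + tmul a b' := by
  simp [tmul, TensorProduct.tmul_add]

@[simp]
theorem tmul_one_left (b : B) : tmul (1 : A) b = 0 := by
  simp [tmul]

@[simp]
theorem tmul_one_right (a : A) : tmul a (1 : B) = 0 := by
  simp [tmul]

@[simp]
theorem tmul_inv_left (a : A) (b : B) : tmul a⁻¹ b = -tmul a b := by
  simp [tmul, TensorProduct.neg_tmul]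

@[elab_as_elim]
theorem induction_on {P : AbTensor A B → Prop} (t : AbTensor A B) (zero : P 0)
    (tmul : ∀ a b, P (tmul a b)) (add : ∀ s t, P s → P t → P (s + t)) : P t := by
  induction t using TensorProduct.induction_on with
  | zero => exact zero
  | tmul x y =>
    obtain ⟨a, rfl⟩ := QuotientGroup.mk_surjective (Additive.toMul x)
    obtain ⟨b, rfl⟩ := QuotientGroup.mk_surjective (Additive.toMul y)
    exact tmul a b
  | add s t hs ht => exact add s t hs ht

def lift (φ : A →* B →* C) : AbTensor A B →+ Additive C :=
  let φab : Abelianization A →* Abelianization B →* C :=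
    (Abelianization.lift (Abelianization.lift φ).flip).flip
  TensorProduct.liftAddHom
    (AddMonoidHom.mk' (fun x ↦ MonoidHom.toAdditive (φab x.toMul)) fun x y ↦ by ext; simp)
    fun n x y ↦ by simp

@[simp]
theorem lift_tmul (φ : A →* B →* C) (a : A) (b : B) :
    lift φ (tmul a b) = Additive.ofMul (φ a b) := by
  simp [lift, tmul]

end AbTensor

theorem TensorProduct.finite_of_finite_left (M N : Type*) [AddCommGroup M] [AddCommGroup N]
    [Finite M] [Module.Finite ℤ N] : Finite (M ⊗[ℤ] N) := by
  have : AddGroup.FG (M ⊗[ℤ] N) :=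
    Module.Finite.iff_addGroup_fg.mp (Module.Finite.tensorProduct ℤ M N)
  refine AddCommGroup.finite_of_fg_isAddTorsion _ fun t ↦
    isOfFinAddOrder_iff_nsmul_eq_zero.mpr ⟨Nat.card M, Nat.card_pos, ?_⟩
  induction t using TensorProduct.induction_on with
  | zero => exact smul_zero _
  | tmul x y => rw [TensorProduct.smul_tmul', card_nsmul_eq_zero', TensorProduct.zero_tmul]
  | add s t hs ht => rw [smul_add, hs, ht, add_zero]

@[ext]
structure Nil2Model (A B : Type*) [Group A] [Group B] where
  left : A
  right : B
  tensor : AbTensor A B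

namespace Nil2Model

variable {A B : Type*} [Group A] [Group B]

instance : Mul (Nil2Model A B) where
  mul x y := ⟨x.left * y.left, x.right * y.right,
    x.tensor + y.tensor - AbTensor.tmul y.left x.right⟩

instance : One (Nil2Model A B) where
  one := ⟨1, 1, 0⟩

instance : Inv (Nil2Model A B) where
  inv x := ⟨x.left⁻¹, x.right⁻¹, AbTensor.tmul x.left x.right⁻¹ - x.tensor⟩

@[simp] theorem mul_left (x y : Nil2Model A B) : (x * y).left = x.left * y.left := rfl
@[simp] theorem mul_right (x y : Nil2Model A B) : (x * y).right = x.right * y.right := rfl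
@[simp] theorem mul_tensor (x y : Nil2Model A B) :
    (x * y).tensor = x.tensor + y.tensor - AbTensor.tmul y.left x.right := rfl
@[simp] theorem one_left : (1 : Nil2Model A B).left = 1 := rfl
@[simp] theorem one_right : (1 : Nil2Model A B).right = 1 := rfl
@[simp] theorem one_tensor : (1 : Nil2Model A B).tensor = 0 := rfl
@[simp] theorem inv_left (x : Nil2Model A B) : x⁻¹.left = x.left⁻¹ := rfl
@[simp] theorem inv_right (x : Nil2Model A B) : x⁻¹.right = x.right⁻¹ := rfl
@[simp] theorem inv_tensor (x : Nil2Model A B) :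
    x⁻¹.tensor = AbTensor.tmul x.left x.right⁻¹ - x.tensor := rfl

instance : Group (Nil2Model A B) where
  mul_assoc x y z := by
    ext <;> simp only [mul_left, mul_right, mul_tensor, AbTensor.tmul_mul_left,
      AbTensor.tmul_mul_right, mul_assoc]
    abel
  one_mul x := by ext <;> simp
  mul_one x := by ext <;> simp
  inv_mul_cancel x := by ext <;> simp

variable (A B) in
def equivProd : Nil2Model A B ≃ A × B × AbTensor A B where
  toFun x := (x.left, x.right, x.tensor)
  invFun p := ⟨p.1, p.2.1, p.2.2⟩

def inl : A →* Nil2Model A B :=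
  MonoidHom.mk' (fun a ↦ ⟨a, 1, 0⟩) fun a a' ↦ by ext <;> simp

def inr : B →* Nil2Model A B :=
  MonoidHom.mk' (fun b ↦ ⟨1, b, 0⟩) fun b b' ↦ by ext <;> simp

def ofTensor (t : AbTensor A B) : Nil2Model A B := ⟨1, 1, t⟩

theorem ofTensor_add (s t : AbTensor A B) : ofTensor (s + t) = ofTensor s * ofTensor t := by
  ext <;> simp [ofTensor]

@[simp]
theorem ofTensor_zero : (ofTensor 0 : Nil2Model A B) = 1 := rfl

theorem ofTensor_mem_center (t : AbTensor A B) : ofTensor t ∈ Subgroup.center (Nil2Model A B) :=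
  Subgroup.mem_center_iff.mpr fun x ↦ by ext <;> simp [ofTensor, add_comm]

theorem commutatorElement_inl_inr (a : A) (b : B) :
    ⁅(inl a : Nil2Model A B), inr b⁆ = ofTensor (AbTensor.tmul a b) := by
  ext <;> simp [inl, inr, ofTensor, commutatorElement_def]

theorem inl_mul_inr_mul_ofTensor (x : Nil2Model A B) :
    inl x.left * inr x.right * ofTensor x.tensor = x := by
  ext <;> simp [inl, inr, ofTensor]

end Nil2Model

namespace Nil2

variable {A B : Type*} [Group A] [Group B]

def mk : Coprod A B →* Nil2 A B := QuotientGroup.mk' (nil2Rel A B)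

theorem mk_surjective : Function.Surjective (mk : Coprod A B → Nil2 A B) :=
  QuotientGroup.mk'_surjective _

theorem mk_eq_one_iff {g : Coprod A B} : (mk g : Nil2 A B) = 1 ↔ g ∈ nil2Rel A B :=
  QuotientGroup.eq_one_iff g

theorem mk_inl (a : A) : (mk (Coprod.inl a) : Nil2 A B) = inl a := rfl

theorem mk_inr (b : B) : (mk (Coprod.inr b) : Nil2 A B) = inr b := rfl

theorem hom_ext {M : Type*} [Monoid M] {f g : Nil2 A B →* M} (hl : f.comp inl = g.comp inl)
    (hr : f.comp inr = g.comp inr) : f = g :=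
  QuotientGroup.monoidHom_ext _ (Coprod.hom_ext hl hr)

theorem commutatorElement_inl_inr_mem_center (a : A) (b : B) :
    ⁅(inl a : Nil2 A B), inr b⁆ ∈ Subgroup.center (Nil2 A B) := by
  refine Subgroup.mem_center_iff.mpr fun x ↦ ?_
  obtain ⟨g, rfl⟩ := mk_surjective x
  refine commutatorElement_eq_one_iff_mul_comm.mp ?_
  rw [← mk_inl, ← mk_inr, ← map_commutatorElement, ← map_commutatorElement, mk_eq_one_iff]
  exact Subgroup.subset_normalClosure ⟨g, a, b, rfl⟩

def toModel : Nil2 A B →* Nil2Model A B :=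
  QuotientGroup.lift (nil2Rel A B) (Coprod.lift Nil2Model.inl Nil2Model.inr) <| by
    refine Subgroup.normalClosure_le_normal ?_
    rintro _ ⟨x, a, b, rfl⟩
    rw [SetLike.mem_coe, MonoidHom.mem_ker, map_commutatorElement, map_commutatorElement,
      Coprod.lift_apply_inl, Coprod.lift_apply_inr, Nil2Model.commutatorElement_inl_inr,
      commutatorElement_eq_one_iff_mul_comm]
    exact Subgroup.mem_center_iff.mp (Nil2Model.ofTensor_mem_center _) _

@[simp]
theorem toModel_inl (a : A) : toModel (inl a : Nil2 A B) = (Nil2Model.inl a : Nil2Model A B) :=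
  rfl

@[simp]
theorem toModel_inr (b : B) : toModel (inr b : Nil2 A B) = (Nil2Model.inr b : Nil2Model A B) :=
  rfl

noncomputable def commutatorLift : AbTensor A B →+ Additive (Subgroup.center (Nil2 A B)) :=
  AbTensor.lift (commutatorPairing inl inr commutatorElement_inl_inr_mem_center)

noncomputable def ofTensor (t : AbTensor A B) : Nil2 A B :=
  ((commutatorLift t).toMul : Subgroup.center (Nil2 A B))

@[simp]
theorem ofTensor_zero : (ofTensor 0 : Nil2 A B) = 1 := by
  simp [ofTensor]

theorem ofTensor_add (s t : AbTensor A B) :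
    (ofTensor (s + t) : Nil2 A B) = ofTensor s * ofTensor t := by
  simp [ofTensor]

theorem ofTensor_neg (t : AbTensor A B) : (ofTensor (-t) : Nil2 A B) = (ofTensor t)⁻¹ := by
  simp [ofTensor]

theorem ofTensor_tmul (a : A) (b : B) :
    ofTensor (AbTensor.tmul a b : AbTensor A B) = ⁅(inl a : Nil2 A B), inr b⁆ := by
  simp [ofTensor, commutatorLift]

theorem toModel_ofTensor (t : AbTensor A B) : toModel (ofTensor t) = Nil2Model.ofTensor t := by
  induction t using AbTensor.induction_on with
  | zero => rw [ofTensor_zero, map_one, Nil2Model.ofTensor_zero]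
  | tmul a b =>
    rw [ofTensor_tmul, map_commutatorElement, toModel_inl, toModel_inr,
      Nil2Model.commutatorElement_inl_inr]
  | add s t hs ht => rw [ofTensor_add, map_mul, hs, ht, Nil2Model.ofTensor_add]

theorem ofTensor_commute (t : AbTensor A B) (x : Nil2 A B) : Commute (ofTensor t) x :=
  (Subgroup.mem_center_iff.mp (commutatorLift t).toMul.prop x).symm

theorem inr_mul_inl (a : A) (b : B) :
    (inr b * inl a : Nil2 A B) = inl a * inr b * ofTensor (-AbTensor.tmul a b) := by
  rw [← (ofTensor_commute _ _).eq, ofTensor_neg, ofTensor_tmul, commutatorElement_def]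
  group

noncomputable def ofModel : Nil2Model A B →* Nil2 A B :=
  MonoidHom.mk' (fun x ↦ inl x.left * inr x.right * ofTensor x.tensor) fun x y ↦ by
    obtain ⟨a, b, s⟩ := x
    obtain ⟨a', b', t⟩ := y
    calc inl (a * a') * inr (b * b') * ofTensor (s + t - AbTensor.tmul a' b)
        = inl a * (inl a' * inr b * ofTensor (-AbTensor.tmul a' b)) * inr b' *
            (ofTensor t * ofTensor s) := by
          rw [show s + t - AbTensor.tmul a' b = -AbTensor.tmul a' b + (t + s) by abel,
            ofTensor_add, ofTensor_add, map_mul, map_mul]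
          simp only [mul_assoc, (ofTensor_commute _ (inr b')).left_comm]
      _ = inl a * inr b * ofTensor s * (inl a' * inr b' * ofTensor t) := by
          rw [← inr_mul_inl, mul_assoc (inl a * inr b), (ofTensor_commute s _).eq]
          simp only [mul_assoc]

theorem toModel_ofModel (x : Nil2Model A B) : toModel (ofModel x) = x := by
  simp [ofModel, toModel_ofTensor, Nil2Model.inl_mul_inr_mul_ofTensor]

theorem ofModel_toModel : ofModel.comp toModel = MonoidHom.id (Nil2 A B) :=
  hom_ext (MonoidHom.ext fun a ↦ by simp [ofModel, Nil2Model.inl])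
    (MonoidHom.ext fun b ↦ by simp [ofModel, Nil2Model.inr])

noncomputable def mulEquivModel : Nil2 A B ≃* Nil2Model A B :=
  toModel.toMulEquiv ofModel ofModel_toModel (MonoidHom.ext toModel_ofModel)

end Nil2

/-- For finite groups `A`, `B`, the group `A *₂ B` is finite of order
`|A|·|B|·|Aᵃᵇ ⊗ Bᵃᵇ|`. -/
theorem stmt10 (A B : Type*) [Group A] [Group B] [Finite A] [Finite B] :
    Finite (Nil2 A B) ∧
      Nat.card (Nil2 A B) = Nat.card A * Nat.card B *
        Nat.card (TensorProduct ℤ (Additive (Abelianization A))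
          (Additive (Abelianization B))) := by
  have : Finite (AbTensor A B) := TensorProduct.finite_of_finite_left _ _
  have e : Nil2 A B ≃ A × B × AbTensor A B :=
    Nil2.mulEquivModel.toEquiv.trans (Nil2Model.equivProd A B)
  refine ⟨Finite.of_equiv _ e.symm, ?_⟩
  rw [Nat.card_congr e, Nat.card_prod, Nat.card_prod, mul_assoc]
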